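/- Let G be a strong digraph on a finite vertex type V with diameter at most 2, i.e., dist(u,v) ≤ 2 for all vertices u, v. Suppose there exist pairwise distinct vertices u, v, w such that (u,v), (v,u) and (v,w) are arcs of G, while (w,v), (u,w) and (w,u) are not arcs of G. Then the second distance ideal I_2(G) is the unit ideal of ℤ[x_v : v ∈ V]. -/
import Mathlib


open MvPolynomial

/-- The ideal generated by the determinants of all `k × k` submatrices of a square
matrix `M` (choices of `k` rows and `k` columns). -/
def minorsIdeal {R : Type*} [CommRing R] {m : Type*} (M : Matrix m m R) (k : ℕ) : Ideal R :=
  Ideal.span { p | ∃ (r c : Fin k → m), Function.Injective r ∧ Function.Injective c ∧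
    p = (M.submatrix r c).det }

/-- A directed walk of length `k` from `u` to `v` in the digraph with arc relation `A`. -/
def IsWalk {V : Type*} (A : V → V → Prop) (k : ℕ) (u v : V) : Prop :=
  ∃ f : Fin (k + 1) → V, f 0 = u ∧ f (Fin.last k) = v ∧
    ∀ i : Fin k, A (f i.castSucc) (f i.succ)

/-- The distance from `u` to `v`: the minimum length of a directed walk from `u` to `v`. -/
noncomputable def ddist {V : Type*} (A : V → V → Prop) (u v : V) : ℕ :=
  sInf {k | IsWalk A k u v}

/-- The matrix `D_X(G)`: variable `x_v` at the `(v,v)` entry, and the constant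
`dist(u,v)` at the `(u,v)` entry for `u ≠ v`. -/
noncomputable def distDX {V : Type*} [DecidableEq V] (A : V → V → Prop) :
    Matrix V V (MvPolynomial V ℤ) :=
  Matrix.of fun u v => if u = v then X u else C (ddist A u v : ℤ)

lemma isWalk_zero {V : Type*} {A : V → V → Prop} {u v : V} (h : IsWalk A 0 u v) : u = v := by
  obtain ⟨f, h0, hl, _⟩ := h
  rw [← h0, ← hl]; rfl

lemma isWalk_one {V : Type*} {A : V → V → Prop} {u v : V} (h : IsWalk A 1 u v) : A u v := by
  obtain ⟨f, h0, hl, hs⟩ := h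
  have h := hs 0
  rw [show (0:Fin 1).castSucc = 0 from rfl, show (0:Fin 1).succ = Fin.last 1 from rfl, h0, hl] at h
  exact h

lemma isWalk_one_of {V : Type*} {A : V → V → Prop} {u v : V} (h : A u v) : IsWalk A 1 u v := by
  refine ⟨![u, v], rfl, rfl, fun i => ?_⟩
  fin_cases i; simpa using h

lemma ddist_eq_one {V : Type*} {A : V → V → Prop} {u v : V} (hne : u ≠ v) (h : A u v) :
    ddist A u v = 1 := by
  have h1 : (1 : ℕ) ∈ {k | IsWalk A k u v} := isWalk_one_of h
  have hle : ddist A u v ≤ 1 := Nat.sInf_le h1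
  have h0 : ddist A u v ≠ 0 := by
    intro h0
    rcases Nat.sInf_eq_zero.mp h0 with hz | he
    · exact hne (isWalk_zero hz)
    · exact absurd h1 (by simp [he])
  omega

lemma ddist_eq_two {V : Type*} {A : V → V → Prop} {u v : V} (hne : u ≠ v) (hna : ¬ A u v)
    (hd : ddist A u v ≤ 2) (hs : ∃ k, IsWalk A k u v) : ddist A u v = 2 := by
  have hmem : ddist A u v ∈ {k | IsWalk A k u v} := Nat.sInf_mem hs
  have h0 : ddist A u v ≠ 0 := fun h => hne (isWalk_zero (by rwa [h] at hmem))
  have h1 : ddist A u v ≠ 1 := fun h => hna (isWalk_one (by rwa [h] at hmem))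
  omega

lemma inj_pair {V : Type*} {a b : V} (h : a ≠ b) : Function.Injective ![a, b] := by
  intro i j hij
  fin_cases i <;> fin_cases j <;> simp_all

/-- Pattern F₄: a strong digraph of diameter at most 2 containing the pattern `F₄`
has trivial second distance ideal. -/
theorem second_ideal_trivial_of_pattern_F4 {V : Type*} [Fintype V] [DecidableEq V]
    (A : V → V → Prop) (hirr : Irreflexive A)
    (hstrong : ∀ u v : V, ∃ k, IsWalk A k u v)
    (hdiam : ∀ u v : V, ddist A u v ≤ 2)
    (u v w : V)
    (huv : u ≠ v) (huw : u ≠ w) (hvw : v ≠ w)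
    (h1 : A u v) (h2 : A v u) (h3 : A v w)
    (h4 : ¬ A w v) (h5 : ¬ A u w) (h6 : ¬ A w u) :
    minorsIdeal (distDX A) 2 = ⊤ := by
  have d_uv : ddist A u v = 1 := ddist_eq_one huv h1
  have d_vw : ddist A v w = 1 := ddist_eq_one hvw h3
  have d_uw : ddist A u w = 2 := ddist_eq_two huw h5 (hdiam u w) (hstrong u w)
  have d_wv : ddist A w v = 2 := ddist_eq_two (Ne.symm hvw) h4 (hdiam w v) (hstrong w v)
  have d_wu : ddist A w u = 2 := ddist_eq_two (Ne.symm huw) h6 (hdiam w u) (hstrong w u)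
  have hg1 : (1 - 2 * X v : MvPolynomial V ℤ) ∈ minorsIdeal (distDX A) 2 := by
    apply Ideal.subset_span
    refine ⟨![u, v], ![v, w], inj_pair huv, inj_pair hvw, ?_⟩
    rw [Matrix.det_fin_two]
    simp [distDX, Matrix.submatrix_apply, huv, huw, hvw, d_uv, d_vw, d_uw]
  have hg2 : (2 * X v - 2 : MvPolynomial V ℤ) ∈ minorsIdeal (distDX A) 2 := by
    apply Ideal.subset_span
    refine ⟨![v, w], ![v, u], inj_pair hvw, inj_pair (Ne.symm huv), ?_⟩
    rw [Matrix.det_fin_two]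
    simp [distDX, Matrix.submatrix_apply, (Ne.symm huv : v ≠ u), (Ne.symm hvw : w ≠ v),
      (Ne.symm huw : w ≠ u), d_wv, d_wu, ddist_eq_one (Ne.symm huv) h2]
    ring
  have hne : (-1 : MvPolynomial V ℤ) ∈ minorsIdeal (distDX A) 2 := by
    have := Ideal.add_mem _ hg1 hg2
    convert this using 1
    ring
  rw [Ideal.eq_top_iff_one]
  simpa using neg_mem hne
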